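/- In the hard-label estimation setting, suppose there exists a constant c > 0 such that |η(x) − 1/2| ≥ c holds P_X-almost surely. Then for any δ ∈ (0,1), with probability at least 1−δ, |β̂(η̂_{1:n}) − β*| ≤ √(log(2/δ)/(2n)) + (1−4c²)/(8cm), where β̂(η̂_{1:n}) = (1/n)∑_{i=1}^n min{η̂_i, 1−η̂_i}, each η̂_i is the average of m conditionally independent Bernoulli(η(x_i)) labels given i.i.d. x_i ∼ P_X, and β* = E_{x∼P_X}[min{η(x), 1−η(x)}] is the Bayes error. -/

import Mathlib

/-!
The error splits as `|β̂ - E β̂| + |E β̂ - β*|`. The first term is a sample mean of `n` i.i.d.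
`[0, 1]`-valued variables, so two-sided Hoeffding bounds it by `√(log (2/δ) / (2n))` with
probability `1 - δ`. For the second, write `min a (1 - a) = 1/2 - |a - 1/2|`: since `η(x)` is at
distance at least `c` from the kink of `|· - 1/2|`, that function lies below its tangent at
`η(x)` plus `(z - η(x))² / (2c)`, and Jensen gives the other side. Hence the bias at `x` is at
most `Var(η̂) / (2c) = η(1 - η) / (2cm) ≤ (1 - 4c²) / (8cm)`.
-/

open MeasureTheory ProbabilityTheory Real
open scoped NNReal

lemma measureReal_abs_sum_ge_le_of_iIndepFun {Ω ι : Type*} [MeasurableSpace Ω] {μ : Measure Ω}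
    {X : ι → Ω → ℝ} (h_indep : iIndepFun X μ) {c : ι → ℝ≥0} {s : Finset ι}
    (h_subG : ∀ i ∈ s, HasSubgaussianMGF (X i) (c i) μ) {ε : ℝ} (hε : 0 ≤ ε) :
    μ.real {ω | ε ≤ |∑ i ∈ s, X i ω|} ≤ 2 * exp (-ε ^ 2 / (2 * ∑ i ∈ s, c i)) := by
  have : IsProbabilityMeasure μ := h_indep.isProbabilityMeasure
  have h_split : {ω | ε ≤ |∑ i ∈ s, X i ω|} =
      {ω | ε ≤ ∑ i ∈ s, X i ω} ∪ {ω | ε ≤ ∑ i ∈ s, (-X i) ω} := by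
    ext ω
    simp [le_abs', Finset.sum_neg_distrib, le_neg, or_comm]
  have h_neg : iIndepFun (fun i => -X i) μ :=
    h_indep.comp (fun _ x => -x) fun _ => measurable_neg
  rw [h_split, two_mul]
  refine (measureReal_union_le _ _).trans (add_le_add ?_ ?_)
  · exact HasSubgaussianMGF.measure_sum_ge_le_of_iIndepFun h_indep h_subG hε
  · exact HasSubgaussianMGF.measure_sum_ge_le_of_iIndepFun h_neg (fun i hi => (h_subG i hi).neg)
      hε

lemma measureReal_abs_sampleMean_sub_ge_le {Z : Type*} [MeasurableSpace Z] {ν : Measure Z}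
    [IsProbabilityMeasure ν] {f : Z → ℝ} (hf : Measurable f) {a b : ℝ}
    (hfab : ∀ z, f z ∈ Set.Icc a b) {n : ℕ} (hn : 0 < n) {ε : ℝ} (hε : 0 ≤ ε) :
    (Measure.pi fun _ : Fin n => ν).real {ω | ε ≤ |(∑ i, f (ω i)) / n - ∫ z, f z ∂ν|} ≤
      2 * exp (-2 * n * ε ^ 2 / (b - a) ^ 2) := by
  have hn' : (0 : ℝ) < n := by positivity
  have h_indep : iIndepFun (fun i (ω : Fin n → Z) => f (ω i) - ∫ z, f z ∂ν)
      (Measure.pi fun _ => ν) :=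
    iIndepFun_pi (X := fun _ z => f z - ∫ z, f z ∂ν) fun _ => (hf.sub_const _).aemeasurable
  have h_subG : ∀ i ∈ Finset.univ,
      HasSubgaussianMGF (fun ω : Fin n → Z => f (ω i) - ∫ z, f z ∂ν) ((‖b - a‖₊ / 2) ^ 2)
        (Measure.pi fun _ => ν) := fun i _ => by
    simpa [integral_comp_eval (μ := fun _ : Fin n => ν) hf.aestronglyMeasurable] using
      hasSubgaussianMGF_of_mem_Icc (μ := Measure.pi fun _ : Fin n => ν) (X := fun ω => f (ω i))
        (hf.comp (measurable_pi_apply i)).aemeasurable (ae_of_all _ fun ω => hfab (ω i))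
  have h_event : {ω : Fin n → Z | ε ≤ |(∑ i, f (ω i)) / n - ∫ z, f z ∂ν|} =
      {ω | n * ε ≤ |∑ i, (f (ω i) - ∫ z, f z ∂ν)|} := by
    ext ω
    have h_mean : (∑ i, f (ω i)) / n - ∫ z, f z ∂ν = (∑ i, (f (ω i) - ∫ z, f z ∂ν)) / n := by
      simp only [Finset.sum_sub_distrib, Finset.sum_const, Finset.card_univ, Fintype.card_fin,
        nsmul_eq_mul]
      field_simp
    simp only [Set.mem_ofPred_eq, h_mean, abs_div, abs_of_pos hn', le_div_iff₀ hn', mul_comm]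
  rw [h_event]
  refine (measureReal_abs_sum_ge_le_of_iIndepFun h_indep h_subG (by positivity)).trans_eq ?_
  congr 2
  simp only [Finset.sum_const, Finset.card_univ, Fintype.card_fin, nsmul_eq_mul]
  push_cast
  rw [Real.norm_eq_abs, div_pow, sq_abs]
  field_simp

lemma ofReal_one_sub_le_measure_of_measureReal_compl_le {Ω : Type*} [MeasurableSpace Ω]
    {μ : Measure Ω} [IsProbabilityMeasure μ] {s : Set Ω} {r : ℝ} (h : μ.real sᶜ ≤ r) :
    ENNReal.ofReal (1 - r) ≤ μ s := by
  have h_cover : 1 ≤ μ s + μ sᶜ := by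
    simpa [Set.union_compl_self] using measure_union_le (μ := μ) s sᶜ
  calc ENNReal.ofReal (1 - r) ≤ ENNReal.ofReal (1 - μ.real sᶜ) := by gcongr
    _ = 1 - μ sᶜ := by
        rw [ENNReal.ofReal_sub _ measureReal_nonneg, ENNReal.ofReal_one, ofReal_measureReal]
    _ ≤ μ s := tsub_le_iff_right.mpr h_cover

lemma min_one_sub_eq_half_sub_abs (a : ℝ) : min a (1 - a) = 1 / 2 - |a - 1 / 2| := by
  rcases le_total a (1 / 2) with h | h
  · rw [min_eq_left (by linarith), abs_of_nonpos (by linarith)]; ring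
  · rw [min_eq_right (by linarith), abs_of_nonneg (by linarith)]; ring

lemma min_one_sub_mem_Icc {a : ℝ} (ha : a ∈ Set.Icc 0 1) : min a (1 - a) ∈ Set.Icc 0 1 :=
  ⟨le_min ha.1 (by linarith [ha.2]), (min_le_left _ _).trans ha.2⟩

/-- Since the kink of `|· - t|` is at distance at least `c` from `p`, the function lies below its
tangent line at `p` plus the quadratic `(z - p)² / (2c)`. -/
lemma abs_sub_le_sign_mul_add_sq_div {z p t c : ℝ} (hc : 0 < c) (hp : c ≤ |p - t|) :
    |z - t| ≤ SignType.sign (p - t) * (z - t) + (z - p) ^ 2 / (2 * c) := by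
  rw [← sub_le_iff_le_add', le_div_iff₀ (by positivity)]
  rcases lt_trichotomy (p - t) 0 with hpt | hpt | hpt
  · rw [sign_neg hpt, abs_of_neg hpt] at *
    rcases le_total z t with hz | hz
    · rw [abs_of_nonpos (by linarith)]
      simp only [SignType.coe_neg, SignType.coe_one]
      nlinarith [sq_nonneg (z - p)]
    · rw [abs_of_nonneg (by linarith)]
      simp only [SignType.coe_neg, SignType.coe_one]
      nlinarith [sq_nonneg (c - (z - t))]
  · rw [hpt, abs_zero] at hp; linarith
  · rw [sign_pos hpt, abs_of_pos hpt] at *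
    rcases le_total z t with hz | hz
    · rw [abs_of_nonpos (by linarith)]
      simp only [SignType.coe_one]
      nlinarith [sq_nonneg (c - (t - z))]
    · rw [abs_of_nonneg (by linarith)]
      simp only [SignType.coe_one]
      nlinarith [sq_nonneg (z - p)]

section Tangent

variable {Ω : Type*} [MeasurableSpace Ω] {ρ : Measure Ω} [IsProbabilityMeasure ρ]

lemma integral_abs_sub_le_abs_integral_sub_add {Y : Ω → ℝ} (hY : MemLp Y 2 ρ) {t c : ℝ}
    (hc : 0 < c) (hsep : c ≤ |ρ[Y] - t|) :
    ∫ ω, |Y ω - t| ∂ρ ≤ |ρ[Y] - t| + Var[Y; ρ] / (2 * c) := by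
  have hY_int : Integrable (fun ω => Y ω - t) ρ :=
    (hY.integrable one_le_two).sub (integrable_const t)
  have hsq_int : Integrable (fun ω => (Y ω - ρ[Y]) ^ 2) ρ :=
    (hY.sub (memLp_const _)).integrable_sq
  set s : ℝ := (SignType.sign (ρ[Y] - t) : ℝ)
  calc ∫ ω, |Y ω - t| ∂ρ
      ≤ ∫ ω, (s * (Y ω - t) + (Y ω - ρ[Y]) ^ 2 / (2 * c)) ∂ρ :=
        integral_mono hY_int.abs ((hY_int.const_mul s).add (hsq_int.div_const _))
          fun ω => abs_sub_le_sign_mul_add_sq_div hc hsep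
    _ = s * (ρ[Y] - t) + Var[Y; ρ] / (2 * c) := by
        rw [integral_add (hY_int.const_mul s) (hsq_int.div_const _), integral_const_mul,
          integral_sub (hY.integrable one_le_two) (integrable_const t), integral_div,
          variance_eq_integral hY.aemeasurable]
        simp
    _ = |ρ[Y] - t| + Var[Y; ρ] / (2 * c) := by rw [sign_mul_self]

lemma abs_integral_min_one_sub_sub_le {Y : Ω → ℝ} (hY : MemLp Y 2 ρ) {c : ℝ} (hc : 0 < c)
    (hsep : c ≤ |ρ[Y] - 1 / 2|) :
    |∫ ω, min (Y ω) (1 - Y ω) ∂ρ - min ρ[Y] (1 - ρ[Y])| ≤ Var[Y; ρ] / (2 * c) := by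
  have h_abs_int : Integrable (fun ω => |Y ω - 1 / 2|) ρ :=
    ((hY.integrable one_le_two).sub (integrable_const _)).abs
  have h_jensen : |ρ[Y] - 1 / 2| ≤ ∫ ω, |Y ω - 1 / 2| ∂ρ := by
    simpa [integral_sub (hY.integrable one_le_two) (integrable_const _)] using
      norm_integral_le_integral_norm (μ := ρ) fun ω => Y ω - 1 / 2
  have h_tangent := integral_abs_sub_le_abs_integral_sub_add hY hc hsep
  simp_rw [min_one_sub_eq_half_sub_abs]
  rw [integral_sub (integrable_const _) h_abs_int, integral_const, probReal_univ, one_smul,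
    sub_sub_sub_cancel_left, abs_le]
  constructor <;> linarith [variance_nonneg Y ρ]

end Tangent

/-- The empirical label average `η̂` of `m` hard labels. -/
noncomputable def fracTrue {m : ℕ} (b : Fin m → Bool) : ℝ :=
  (∑ j, if b j then (1 : ℝ) else 0) / m

lemma fracTrue_mem_Icc {m : ℕ} (b : Fin m → Bool) : fracTrue b ∈ Set.Icc 0 1 := by
  rcases Nat.eq_zero_or_pos m with rfl | hm
  · simp [fracTrue]
  have hm' : (0 : ℝ) < m := by positivity
  refine ⟨div_nonneg (Finset.sum_nonneg fun j _ => by split_ifs <;> norm_num) hm'.le, ?_⟩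
  rw [fracTrue, div_le_one hm']
  calc (∑ j, if b j then (1 : ℝ) else 0) ≤ ∑ _j : Fin m, (1 : ℝ) :=
        Finset.sum_le_sum fun j _ => by split_ifs <;> norm_num
    _ = m := by simp

section Bernoulli

variable {q : ℝ≥0} (hq : q ≤ 1)

lemma integral_ite_bernoulli :
    ∫ b, (if b then (1 : ℝ) else 0) ∂(PMF.bernoulli q hq).toMeasure = q := by
  simp [PMF.integral_eq_sum, PMF.bernoulli_apply]

lemma variance_ite_bernoulli :
    Var[fun b => if b then (1 : ℝ) else 0; (PMF.bernoulli q hq).toMeasure] = q * (1 - q) := by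
  rw [variance_eq_integral (measurable_of_countable _).aemeasurable, integral_ite_bernoulli]
  simp only [PMF.integral_eq_sum, Fintype.sum_bool, PMF.bernoulli_apply, cond_true, cond_false,
    ENNReal.coe_toReal, smul_eq_mul, NNReal.coe_sub hq, NNReal.coe_one, Bool.false_eq_true,
    ↓reduceIte]
  ring

variable {m : ℕ}

lemma integral_fracTrue_pi_bernoulli (hm : 0 < m) :
    ∫ b, fracTrue b ∂(Measure.pi fun _ : Fin m => (PMF.bernoulli q hq).toMeasure) = q := by
  simp only [fracTrue]
  rw [integral_div, integral_finsetSum _ fun j _ => Integrable.of_finite]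
  simp_rw [integral_comp_eval (μ := fun _ : Fin m => (PMF.bernoulli q hq).toMeasure)
    (f := fun b => if b then (1 : ℝ) else 0) (measurable_of_countable _).aestronglyMeasurable,
    integral_ite_bernoulli]
  simp only [Finset.sum_const, Finset.card_univ, Fintype.card_fin, nsmul_eq_mul]
  field_simp

lemma variance_fracTrue_pi_bernoulli :
    Var[fracTrue; Measure.pi fun _ : Fin m => (PMF.bernoulli q hq).toMeasure] =
      q * (1 - q) / m := by
  have h_sum : (fracTrue : (Fin m → Bool) → ℝ) =
      fun b => (m : ℝ)⁻¹ *
        (∑ j : Fin m, fun b : Fin m → Bool => if b j then (1 : ℝ) else 0) b := by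
    ext b
    simp [fracTrue, div_eq_inv_mul]
  have h_var := variance_sum_pi (μ := fun _ : Fin m => (PMF.bernoulli q hq).toMeasure)
    (X := fun _ b => if b then (1 : ℝ) else 0) fun _ => MemLp.of_discrete
  beta_reduce at h_var
  rw [h_sum, variance_const_mul, h_var]
  simp only [variance_ite_bernoulli, Finset.sum_const, Finset.card_univ, Fintype.card_fin,
    nsmul_eq_mul]
  rcases Nat.eq_zero_or_pos m with rfl | hm
  · simp
  · field_simp

lemma abs_integral_min_fracTrue_sub_le (hm : 0 < m) {c : ℝ} (hc : 0 < c)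
    (hsep : c ≤ |(q : ℝ) - 1 / 2|) :
    |∫ b, min (fracTrue b) (1 - fracTrue b)
        ∂(Measure.pi fun _ : Fin m => (PMF.bernoulli q hq).toMeasure) - min (q : ℝ) (1 - q)| ≤
      (1 - 4 * c ^ 2) / (8 * c * m) := by
  have h := abs_integral_min_one_sub_sub_le (Y := fracTrue) MemLp.of_discrete hc
    (by rwa [integral_fracTrue_pi_bernoulli hq hm])
  rw [integral_fracTrue_pi_bernoulli hq hm, variance_fracTrue_pi_bernoulli] at h
  have h_pq : (q : ℝ) * (1 - q) ≤ (1 - 4 * c ^ 2) / 4 := by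
    nlinarith [sq_abs ((q : ℝ) - 1 / 2), mul_self_le_mul_self hc.le hsep]
  calc _ ≤ (q : ℝ) * (1 - q) / m / (2 * c) := h
    _ ≤ (1 - 4 * c ^ 2) / 4 / m / (2 * c) := by gcongr
    _ = (1 - 4 * c ^ 2) / (8 * c * m) := by ring

end Bernoulli

lemma abs_integral_compProd_min_fracTrue_sub_le {X : Type*} [MeasurableSpace X] {μ : Measure X}
    [IsProbabilityMeasure μ] {η : X → ℝ} (hη : Measurable η)
    (hη01 : ∀ x, η x ∈ Set.Icc (0 : ℝ) 1) {m : ℕ} (hm : 0 < m) {κ : Kernel X (Fin m → Bool)}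
    [IsMarkovKernel κ]
    (hκ : ∀ x, κ x = Measure.pi fun _ : Fin m =>
      (PMF.bernoulli (Real.toNNReal (η x)) (Real.toNNReal_le_one.mpr (hη01 x).2)).toMeasure)
    {c : ℝ} (hc : 0 < c) (hsep : ∀ᵐ x ∂μ, c ≤ |η x - 1 / 2|) :
    |∫ z, min (fracTrue z.2) (1 - fracTrue z.2) ∂(μ.compProd κ) - ∫ x, min (η x) (1 - η x) ∂μ| ≤
      (1 - 4 * c ^ 2) / (8 * c * m) := by
  set g : (Fin m → Bool) → ℝ := fun b => min (fracTrue b) (1 - fracTrue b)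
  have hg : ∀ b, g b ∈ Set.Icc 0 1 := fun b => min_one_sub_mem_Icc (fracTrue_mem_Icc b)
  have hg_int : Integrable (fun z : X × (Fin m → Bool) => g z.2) (μ.compProd κ) :=
    .of_mem_Icc 0 1 ((measurable_of_countable g).comp measurable_snd).aemeasurable
      (ae_of_all _ fun z => hg z.2)
  have hI_int : Integrable (fun x => ∫ b, g b ∂κ x) μ :=
    (integrable_const (1 : ℝ)).mono'
      (measurable_of_countable g).stronglyMeasurable.integral_kernel.aestronglyMeasurable
      (ae_of_all _ fun x => (norm_integral_le_of_norm_le_const (ae_of_all _ fun b => by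
        simpa [Real.norm_eq_abs, abs_le] using ⟨by linarith [(hg b).1], (hg b).2⟩)).trans
          (by simp))
  have hmin_int : Integrable (fun x => min (η x) (1 - η x)) μ :=
    .of_mem_Icc 0 1 (hη.min (measurable_const.sub hη)).aemeasurable
      (ae_of_all _ fun x => min_one_sub_mem_Icc (hη01 x))
  rw [Measure.integral_compProd hg_int, ← integral_sub hI_int hmin_int]
  have h_bias : ∀ᵐ x ∂μ, ‖∫ b, g b ∂κ x - min (η x) (1 - η x)‖ ≤
      (1 - 4 * c ^ 2) / (8 * c * m) := by
    filter_upwards [hsep] with x hx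
    have hq : (Real.toNNReal (η x) : ℝ) = η x := Real.coe_toNNReal _ (hη01 x).1
    have h := abs_integral_min_fracTrue_sub_le (Real.toNNReal_le_one.mpr (hη01 x).2) hm hc
      (by rwa [hq])
    rwa [hq, ← hκ x] at h
  simpa using norm_integral_le_of_norm_le_const h_bias

theorem consistency_hard_label_separated
    {X : Type*} [MeasurableSpace X]
    (μ : Measure X) [IsProbabilityMeasure μ]
    (η : X → ℝ) (hη : Measurable η)
    (hη01 : ∀ x, η x ∈ Set.Icc (0 : ℝ) 1)
    (n m : ℕ) (hn : 0 < n) (hm : 0 < m)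
    (κ : Kernel X (Fin m → Bool)) [IsMarkovKernel κ]
    (hκ : ∀ x, κ x = Measure.pi fun _ : Fin m =>
      (PMF.bernoulli (Real.toNNReal (η x))
        (Real.toNNReal_le_one.mpr (hη01 x).2)).toMeasure)
    (c : ℝ) (hc : 0 < c)
    (hsep : ∀ᵐ x ∂μ, c ≤ |η x - 1 / 2|)
    (δ : ℝ) (hδ : δ ∈ Set.Ioo (0 : ℝ) 1) :
    let P : Measure (Fin n → X × (Fin m → Bool)) :=
      (Measure.pi fun _ : Fin n => μ.compProd κ);
    let etaHat : (Fin n → X × (Fin m → Bool)) → Fin n → ℝ :=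
      (fun ω i => (∑ j : Fin m, if (ω i).2 j then (1 : ℝ) else 0) / m);
    let betaHat : (Fin n → X × (Fin m → Bool)) → ℝ :=
      (fun ω => (∑ i : Fin n, min (etaHat ω i) (1 - etaHat ω i)) / n);
    let bayes : ℝ := (∫ x, min (η x) (1 - η x) ∂μ);
    ENNReal.ofReal (1 - δ) ≤
      P {ω | |betaHat ω - bayes| ≤
        Real.sqrt (Real.log (2 / δ) / (2 * (n : ℝ))) +
          (1 - 4 * c ^ 2) / (8 * c * (m : ℝ))} := by
  intro P etaHat betaHat bayes
  obtain ⟨hδ0, hδ1⟩ := hδ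
  set ε := √(Real.log (2 / δ) / (2 * (n : ℝ)))
  set g : X × (Fin m → Bool) → ℝ := fun z => min (fracTrue z.2) (1 - fracTrue z.2)
  have h_bias : |∫ z, g z ∂(μ.compProd κ) - bayes| ≤ (1 - 4 * c ^ 2) / (8 * c * m) :=
    abs_integral_compProd_min_fracTrue_sub_le hη hη01 hm hκ hc hsep
  have h_radius : 2 * exp (-2 * n * ε ^ 2) = δ := by
    have h_log : 0 ≤ Real.log (2 / δ) := Real.log_nonneg (by rw [le_div_iff₀ hδ0]; linarith)
    rw [sq_sqrt (by positivity)]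
    field_simp
    rw [exp_neg, exp_log (by positivity)]
    field_simp
  have h_tail : P.real {ω | ε ≤ |betaHat ω - ∫ z, g z ∂(μ.compProd κ)|} ≤ δ := by
    have h := measureReal_abs_sampleMean_sub_ge_le (ν := μ.compProd κ) (f := g) (ε := ε)
      ((measurable_of_countable fun b : Fin m → Bool => min (fracTrue b) (1 - fracTrue b)).comp
        measurable_snd)
      (fun z => min_one_sub_mem_Icc (fracTrue_mem_Icc z.2)) hn (sqrt_nonneg _)
    rwa [sub_zero, one_pow, div_one, h_radius] at h
  refine ofReal_one_sub_le_measure_of_measureReal_compl_le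
    (h_tail.trans' (measureReal_mono fun ω hω => ?_))
  simp only [Set.mem_compl_iff, Set.mem_ofPred_eq, not_le] at hω ⊢
  linarith [abs_sub_le (betaHat ω) (∫ z, g z ∂(μ.compProd κ)) bayes]
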